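/- Work with a finite oriented multigraph given by finite types V (vertices) and E (edges) together with maps s t : E → V, with V nonempty. Assume the multigraph has no loops and is connected. Let θ : Equiv.Perm V be a cyclic permutation of all the vertices (θ.IsCycle and θ.support = Finset.univ), let v = Fintype.card V, and let M : Matrix E E ℤ be a chain map over θ that is HTC. If k is a natural number such that v does not divide 2^k, then there exists an edge e : E with (M ^ (2^k)) e e < 0. -/

import Mathlib

/-- The boundary matrix of a finite oriented multigraph with source map `s`
and target map `t`: `∂ v e = [v = t e] - [v = s e]`. -/
def boundaryMatrix {V E : Type*} [DecidableEq V] (s t : E → V) : Matrix V E ℤ :=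
  fun v e => (if v = t e then 1 else 0) - (if v = s e then 1 else 0)

/-- The permutation matrix of `θ`: `P_θ u w = [u = θ w]`. -/
def permMatrix {V : Type*} [DecidableEq V] (θ : Equiv.Perm V) : Matrix V V ℤ :=
  fun u w => if u = θ w then 1 else 0

/-- `M` is a chain map over the vertex permutation `θ`: `∂ * M = P_θ * ∂`. -/
def IsChainMap {V E : Type*} [DecidableEq V] [Fintype V] [Fintype E]
    (s t : E → V) (θ : Equiv.Perm V) (M : Matrix E E ℤ) : Prop :=
  boundaryMatrix s t * M = permMatrix θ * boundaryMatrix s t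

/-- `M` is HTC (homotopic-to-a-constant-map condition): `M` annihilates the
cycle space, i.e. the kernel of the boundary matrix. -/
def IsHTC {V E : Type*} [DecidableEq V] [Fintype E]
    (s t : E → V) (M : Matrix E E ℤ) : Prop :=
  ∀ x : E → ℤ, (boundaryMatrix s t).mulVec x = 0 → M.mulVec x = 0

/-- The multigraph has no loops: `s e ≠ t e` for every edge. -/
def NoLoops {V E : Type*} (s t : E → V) : Prop :=
  ∀ e : E, s e ≠ t e

/-- The multigraph is connected: the smallest equivalence relation relating
`s e` and `t e` for every edge `e` is the total relation. -/
def IsConn {V E : Type*} (s t : E → V) : Prop :=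
  ∀ u v : V, Relation.EqvGen (fun a b => ∃ e : E, s e = a ∧ t e = b) u v

/-!
The Lefschetz trace formula for the chain map `(M, P_θ)` of the graph's chain complex gives
`tr Mⁿ = tr P_θⁿ - 1` for `n ≥ 1`: connectedness makes `H₀ = ℤ`, on which `P_θ` acts as the
identity, and HTC makes `M` vanish on `H₁`. When `v ∤ 2^k`, the `v`-cycle `θ^(2^k)` fixes no
vertex, so `tr M^(2^k) = -1` and some diagonal entry is negative.
-/

open Finset
open scoped Matrix

lemma Matrix.mul_pow_mul {m n R : Type*} [Fintype m] [Fintype n] [DecidableEq m] [DecidableEq n]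
    [Semiring R] (A : Matrix m n R) (B : Matrix n m R) (k : ℕ) :
    (A * B) ^ k * A = A * (B * A) ^ k := by
  induction k with
  | zero => simp
  | succ k ih =>
    rw [pow_succ', Matrix.mul_assoc, ih, pow_succ']
    simp only [Matrix.mul_assoc]

section Graph

variable {V E : Type*} [DecidableEq V]

lemma permMatrix_mul [Fintype V] (σ τ : Equiv.Perm V) :
    permMatrix σ * permMatrix τ = permMatrix (σ * τ) := by
  ext u w
  simp only [Matrix.mul_apply, permMatrix, mul_ite, mul_one, mul_zero, Finset.sum_ite_eq',
    Finset.mem_univ, ↓reduceIte, Equiv.Perm.coe_mul, Function.comp_apply]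
  -- `simp` cannot rewrite `(σ * τ) w` inside the `Decidable` instance of the right-hand side
  rfl

lemma permMatrix_pow [Fintype V] (σ : Equiv.Perm V) (n : ℕ) :
    permMatrix σ ^ n = permMatrix (σ ^ n) := by
  induction n with
  | zero => ext u w; simp [permMatrix, Matrix.one_apply]
  | succ n ih => rw [pow_succ, pow_succ, ih, permMatrix_mul]

lemma one_vecMul_permMatrix [Fintype V] (σ : Equiv.Perm V) : 1 ᵥ* permMatrix σ = 1 := by
  ext w
  simp [Matrix.vecMul, dotProduct, permMatrix]

lemma trace_permMatrix [Fintype V] (σ : Equiv.Perm V) :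
    (permMatrix σ).trace = #{w | σ w = w} := by
  simp [Matrix.trace, permMatrix, eq_comm]

lemma one_vecMul_boundaryMatrix [Fintype V] [Fintype E] (s t : E → V) :
    (1 : V → ℤ) ᵥ* boundaryMatrix s t = 0 := by
  ext e
  simp [Matrix.vecMul, dotProduct, boundaryMatrix, sum_sub_distrib]

lemma boundaryMatrix_mulVec_single [Fintype E] [DecidableEq E] (s t : E → V) (f : E) :
    boundaryMatrix s t *ᵥ Pi.single f 1 = Pi.single (t f) 1 - Pi.single (s f) 1 := by
  ext v
  simp [boundaryMatrix, Pi.single_apply]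

lemma mul_boundaryMatrix_apply {ι : Type*} [Fintype V] (s t : E → V) (N : Matrix ι V ℤ)
    (i : ι) (f : E) : (N * boundaryMatrix s t) i f = N i (t f) - N i (s f) := by
  simp [Matrix.mul_apply, boundaryMatrix, mul_sub]

namespace IsConn

variable [Fintype E] {s t : E → V}

lemma exists_boundaryMatrix_mulVec_eq (hconn : IsConn s t) (u w : V) :
    ∃ x : E → ℤ, boundaryMatrix s t *ᵥ x = Pi.single w 1 - Pi.single u 1 := by
  classical
  induction hconn u w with
  | rel a b hab =>
    obtain ⟨e, rfl, rfl⟩ := hab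
    exact ⟨Pi.single e 1, boundaryMatrix_mulVec_single s t e⟩
  | refl a => exact ⟨0, by rw [Matrix.mulVec_zero, sub_self]⟩
  | symm a b _ ih =>
    obtain ⟨x, hx⟩ := ih
    exact ⟨-x, by rw [Matrix.mulVec_neg, hx, neg_sub]⟩
  | trans a b c _ _ ih₁ ih₂ =>
    obtain ⟨x, hx⟩ := ih₁
    obtain ⟨y, hy⟩ := ih₂
    exact ⟨x + y, by rw [Matrix.mulVec_add, hx, hy]; abel⟩

variable [Fintype V]

lemma apply_eq_of_mul_boundaryMatrix_eq_zero {ι : Type*} (hconn : IsConn s t)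
    {C : Matrix ι V ℤ} (hC : C * boundaryMatrix s t = 0) (i : ι) (u w : V) :
    C i u = C i w := by
  obtain ⟨x, hx⟩ := hconn.exists_boundaryMatrix_mulVec_eq u w
  have h := congrFun (congrArg (C *ᵥ ·) hx) i
  simp only [Matrix.mulVec_mulVec, hC, Matrix.zero_mulVec, Matrix.mulVec_sub,
    Matrix.mulVec_single_one] at h
  simpa [sub_eq_zero, eq_comm] using h.symm

lemma trace_eq_one_vecMul_apply (hconn : IsConn s t) {C : Matrix V V ℤ}
    (hC : C * boundaryMatrix s t = 0) (w : V) : C.trace = (1 ᵥ* C) w := by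
  simp only [Matrix.trace, Matrix.diag, Matrix.vecMul, dotProduct, Pi.one_apply, one_mul]
  exact sum_congr rfl fun u _ => hconn.apply_eq_of_mul_boundaryMatrix_eq_zero hC u u w

end IsConn

variable [Fintype V] [Fintype E] [DecidableEq E] {s t : E → V} {θ : Equiv.Perm V}
  {M : Matrix E E ℤ}

lemma IsHTC.exists_eq_mul_boundaryMatrix [Nonempty V] (hM : IsHTC s t M) (hconn : IsConn s t) :
    ∃ N : Matrix E V ℤ, M = N * boundaryMatrix s t := by
  choose x hx using hconn.exists_boundaryMatrix_mulVec_eq (Classical.arbitrary V)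
  refine ⟨.of fun e u => (M *ᵥ x u) e, Matrix.ext fun e f => ?_⟩
  have hcycle : M *ᵥ (x (t f) - x (s f) - Pi.single f 1) = 0 := by
    apply hM
    rw [Matrix.mulVec_sub, Matrix.mulVec_sub, hx, hx, boundaryMatrix_mulVec_single]
    abel
  rw [Matrix.mulVec_sub, Matrix.mulVec_sub, sub_eq_zero, Matrix.mulVec_single_one] at hcycle
  rw [mul_boundaryMatrix_apply, ← Matrix.col_apply M f e, ← hcycle]
  simp

lemma IsChainMap.pow (hM : IsChainMap s t θ M) (n : ℕ) : IsChainMap s t (θ ^ n) (M ^ n) := by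
  unfold IsChainMap at *
  rw [← permMatrix_pow]
  induction n with
  | zero => simp
  | succ n ih =>
    rw [pow_succ', ← Matrix.mul_assoc, hM, Matrix.mul_assoc, ih, ← Matrix.mul_assoc, ← pow_succ']

/-- Writing `M = N ∂`, the matrix `B = ∂ N` has the traces of `M`'s powers, zero column sums,
and `Bⁿ ∂ = P_θⁿ ∂`. -/
lemma IsChainMap.trace_pow [Nonempty V] (hM : IsChainMap s t θ M) (hMhtc : IsHTC s t M)
    (hconn : IsConn s t) {n : ℕ} (hn : n ≠ 0) :
    (M ^ n).trace = (permMatrix (θ ^ n)).trace - 1 := by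
  obtain ⟨N, rfl⟩ := hMhtc.exists_eq_mul_boundaryMatrix hconn
  obtain ⟨m, rfl⟩ := Nat.exists_eq_add_one_of_ne_zero hn
  set D := boundaryMatrix s t
  set B := D * N
  have htrace : ((N * D) ^ (m + 1)).trace = (B ^ (m + 1)).trace := by
    rw [pow_succ', Matrix.mul_assoc, ← Matrix.mul_pow_mul, Matrix.trace_mul_comm,
      Matrix.mul_assoc, ← pow_succ]
  have hpow : (B ^ (m + 1) - permMatrix (θ ^ (m + 1))) * D = 0 := by
    rw [Matrix.sub_mul, Matrix.mul_pow_mul, sub_eq_zero]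
    exact hM.pow (m + 1)
  have hcolsum : 1 ᵥ* (B ^ (m + 1) - permMatrix (θ ^ (m + 1))) = -1 := by
    rw [Matrix.vecMul_sub, pow_succ', ← Matrix.vecMul_vecMul, ← Matrix.vecMul_vecMul,
      one_vecMul_boundaryMatrix, Matrix.zero_vecMul, Matrix.zero_vecMul, one_vecMul_permMatrix,
      zero_sub]
  have h := hconn.trace_eq_one_vecMul_apply hpow (Classical.arbitrary V)
  rw [hcolsum, Pi.neg_apply, Pi.one_apply, Matrix.trace_sub, ← htrace] at h
  linarith

end Graph

lemma Equiv.Perm.IsCycle.pow_apply_ne_self {V : Type*} [Fintype V] [DecidableEq V]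
    {θ : Equiv.Perm V} (hcyc : θ.IsCycle) (hsupp : θ.support = univ) {n : ℕ}
    (hn : ¬ Fintype.card V ∣ n) (w : V) : (θ ^ n) w ≠ w := by
  have hcycOn : θ.IsCycleOn (univ : Finset V) := by
    simpa [← coe_support_eq_set_support, hsupp] using hcyc.isCycleOn
  rwa [Ne, hcycOn.pow_apply_eq (mem_univ w), card_univ]

theorem exists_neg_diagonal_entry_pow_two_pow_general
    {V E : Type*} [Fintype V] [DecidableEq V] [Fintype E] [DecidableEq E] [Nonempty V]
    (s t : E → V) (hconn : IsConn s t)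
    (θ : Equiv.Perm V) (hcyc : θ.IsCycle) (hsupp : θ.support = Finset.univ)
    (M : Matrix E E ℤ) (hM : IsChainMap s t θ M) (hMhtc : IsHTC s t M)
    (k : ℕ) (hk : ¬ (Fintype.card V ∣ 2 ^ k)) :
    ∃ e : E, (M ^ (2 ^ k)) e e < 0 := by
  have hfix : #{w | (θ ^ 2 ^ k) w = w} = 0 := by
    simpa using hcyc.pow_apply_ne_self hsupp hk
  have htrace : (M ^ 2 ^ k).trace < 0 := by
    rw [hM.trace_pow hMhtc hconn (by positivity), trace_permMatrix, hfix]
    norm_num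
  obtain ⟨e, -, he⟩ := exists_lt_of_sum_lt (s := univ) (g := fun _ => (0 : ℤ))
    (by simpa [Matrix.trace] using htrace)
  exact ⟨e, he⟩

theorem exists_neg_diagonal_entry_pow_two_pow
    {V E : Type*} [Fintype V] [DecidableEq V] [Fintype E] [DecidableEq E] [Nonempty V]
    (s t : E → V) (hloop : NoLoops s t) (hconn : IsConn s t)
    (θ : Equiv.Perm V) (hcyc : θ.IsCycle) (hsupp : θ.support = Finset.univ)
    (M : Matrix E E ℤ) (hM : IsChainMap s t θ M) (hMhtc : IsHTC s t M)
    (k : ℕ) (hk : ¬ (Fintype.card V ∣ 2 ^ k)) :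
    ∃ e : E, (M ^ (2 ^ k)) e e < 0 :=
  exists_neg_diagonal_entry_pow_two_pow_general s t hconn θ hcyc hsupp M hM hMhtc k hk
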